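/- For k odd and n odd, the number of maximum non-attacking rook placements on the circular chained board B^∘_{n,k} equals k·⌈n/2⌉·((n)_{⌈n/2⌉})^{⌊k/2⌋}·((n)_{⌊n/2⌋})^{⌈k/2⌉}. -/

import Mathlib

/-- Non-attacking rook placement on the linear chained board `B⁻_{n,k}`:
rooks are triples (board, row, column). -/
def LinNonAtt (n k : ℕ) (R : Finset (Fin k × Fin n × Fin n)) : Prop :=
  (∀ r ∈ R, ∀ s ∈ R, r ≠ s → r.1 = s.1 → r.2.1 ≠ s.2.1 ∧ r.2.2 ≠ s.2.2) ∧
  (∀ r ∈ R, ∀ s ∈ R, (r.1 : ℕ) + 1 = (s.1 : ℕ) → r.2.1 ≠ s.2.2)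

/-- Non-attacking rook placement on the circular chained board `B°_{n,k}`. -/
def CircNonAtt (n k : ℕ) (R : Finset (Fin k × Fin n × Fin n)) : Prop :=
  (∀ r ∈ R, ∀ s ∈ R, r ≠ s → r.1 = s.1 → r.2.1 ≠ s.2.1 ∧ r.2.2 ≠ s.2.2) ∧
  (∀ r ∈ R, ∀ s ∈ R, ((r.1 : ℕ) + 1) % k = (s.1 : ℕ) → r.2.1 ≠ s.2.2)

/-- Number of rooks of `R` on board `i`. -/
def bCount {n k : ℕ} (R : Finset (Fin k × Fin n × Fin n)) (i : Fin k) : ℕ :=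
  (R.filter fun r => r.1 = i).card

/-- `a_{i-1}` with the convention `a_0 = 0` (linear case). -/
def prevL {k : ℕ} (a : Fin k → ℕ) (i : Fin k) : ℕ :=
  if i.val = 0 then 0
  else a ⟨i.val - 1, Nat.lt_of_le_of_lt (Nat.sub_le _ _) i.isLt⟩

/-- `a_{i-1}` with cyclic index convention (circular case). -/
def prevC {k : ℕ} (a : Fin k → ℕ) (i : Fin k) : ℕ :=
  a ⟨(i.val + (k - 1)) % k, Nat.mod_lt _ i.pos⟩

/-!
Record the number `a i` of rooks on each board. The rows used on board `i` and the columns used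
on board `i + 1` are disjoint, so `a i + a (i + 1) ≤ n`. Summing around the cycle, a placement
with `(n k - 1) / 2` rooks makes all these bounds tight except one, where the sum is `n - 1`.
Walking once around the cycle from the second board of that slack pair, the counts alternate
between some `c` and `n - c`; as `k` is odd, the walk ends on the first board of the slack pair
with `c` again, so `2 c = n - 1`, i.e. `c = m` where `n = 2 m + 1`. Hence the count vector is one
of the `k` cyclic shifts of the extremal composition.

For a fixed count vector, choose the column set `C i` of every board first: board `i` then
amounts to an injection of `C i` into the complement of `C (i + 1)`, which gives
`∏ i, C(n, a i) · (n - a (i + 1))_(a i)`; for every shift this is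
`(m + 1) · ((n)_m)^(j + 1) · ((n)_(m + 1))^j` with `k = 2 j + 1`.
-/

open Finset

open scoped Classical

def NonAttacking {α β : Type*} (p : Finset (α × β)) : Prop :=
  ∀ x ∈ p, ∀ y ∈ p, x ≠ y → x.1 ≠ y.1 ∧ x.2 ≠ y.2

namespace NonAttacking

variable {α β : Type*} {p : Finset (α × β)}

theorem injOn_fst (hp : NonAttacking p) : Set.InjOn Prod.fst (p : Set (α × β)) :=
  fun x hx y hy h => by_contra fun hne => (hp x hx y hy hne).1 h

theorem injOn_snd (hp : NonAttacking p) : Set.InjOn Prod.snd (p : Set (α × β)) :=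
  fun x hx y hy h => by_contra fun hne => (hp x hx y hy hne).2 h

end NonAttacking

section RookPlacements

variable {α β : Type*} [Fintype α] [Fintype β]

noncomputable def rookPlacements (C : Finset β) (D : Finset α) : Finset (Finset (α × β)) :=
  {p | NonAttacking p ∧ p.image Prod.snd = C ∧ ∀ x ∈ p, x.1 ∈ D}

theorem mem_rookPlacements {C : Finset β} {D : Finset α} {p : Finset (α × β)} :
    p ∈ rookPlacements C D ↔ NonAttacking p ∧ p.image Prod.snd = C ∧ ∀ x ∈ p, x.1 ∈ D := by
  simp [rookPlacements]

/-- A placement with column set `C` and rows in `D` is the graph of an injection `C ↪ D`. -/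
theorem card_rookPlacements (C : Finset β) (D : Finset α) :
    #(rookPlacements C D) = (#D).descFactorial #C := by
  rw [← Fintype.card_coe D, ← Fintype.card_coe C, ← Fintype.card_embedding_eq, ← card_univ]
  symm
  refine card_bij (fun f _ => univ.image fun c : C => ((f c : α), (c : β))) ?_ ?_ ?_
  · intro f _
    refine mem_rookPlacements.2 ⟨?_, ?_, ?_⟩
    · rintro _ hx _ hy hne
      obtain ⟨c, -, rfl⟩ := mem_image.1 hx
      obtain ⟨c', -, rfl⟩ := mem_image.1 hy
      have hcc' : c ≠ c' := by rintro rfl; exact hne rfl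
      exact ⟨fun h => hcc' (f.injective (Subtype.ext h)), fun h => hcc' (Subtype.ext h)⟩
    · ext b
      simp
    · intro x hx
      obtain ⟨c, -, rfl⟩ := mem_image.1 hx
      exact (f c).2
  · intro f _ g _ hfg
    ext c
    have hc : ((f c : α), (c : β)) ∈ univ.image fun c : C => ((g c : α), (c : β)) := by
      rw [← hfg]; exact mem_image_of_mem _ (mem_univ c)
    obtain ⟨c', _, hc'⟩ := mem_image.1 hc
    obtain rfl : c' = c := Subtype.ext (congrArg Prod.snd hc')
    exact (congrArg Prod.fst hc').symm
  · intro p hp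
    obtain ⟨hna, hcol, hrow⟩ := mem_rookPlacements.1 hp
    have hex : ∀ c : C, ∃ x ∈ p, x.2 = c := fun c => by
      simpa [← hcol] using c.2
    choose g hgp hgc using hex
    have hg : ∀ c, ((g c).1, (c : β)) = g c := fun c => Prod.ext rfl (hgc c).symm
    refine ⟨⟨fun c => ⟨(g c).1, hrow _ (hgp c)⟩, fun c c' h => ?_⟩, mem_univ _, ?_⟩
    · have : g c = g c' := hna.injOn_fst (hgp c) (hgp c') (congrArg Subtype.val h)
      exact Subtype.ext ((hgc c).symm.trans (this ▸ hgc c'))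
    · ext x
      simp only [mem_image, mem_univ, true_and]
      refine ⟨fun ⟨c, hc⟩ => hc ▸ (hg c ▸ hgp c : ((g c).1, (c : β)) ∈ p), fun hx => ?_⟩
      have hxC : x.2 ∈ C := hcol ▸ mem_image_of_mem _ hx
      exact ⟨⟨x.2, hxC⟩, (hg _).trans (hna.injOn_snd (hgp _) hx (hgc _))⟩

end RookPlacements

section BoardsAt

variable {α β : Type*}

noncomputable def boardAt (R : Finset (α × β)) (a : α) : Finset β :=
  R.preimage (Prod.mk a) (Prod.mk_right_injective a).injOn

@[simp]
theorem mem_boardAt {R : Finset (α × β)} {a : α} {b : β} : b ∈ boardAt R a ↔ (a, b) ∈ R :=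
  mem_preimage

theorem card_boardAt [DecidableEq α] (R : Finset (α × β)) (a : α) :
    #(boardAt R a) = #{r ∈ R | r.1 = a} := by
  rw [boardAt, card_preimage]
  congr 1
  refine filter_congr fun ⟨b, c⟩ _ => ?_
  simp [eq_comm]

noncomputable def boardAtEquiv [Fintype α] [Fintype β] : Finset (α × β) ≃ (α → Finset β) where
  toFun := boardAt
  invFun P := {r | r.2 ∈ P r.1}
  left_inv R := by ext; simp
  right_inv P := by ext; simp

end BoardsAt

section CircularPlacements

variable {k : ℕ} [NeZero k] {γ : Type*} [Fintype γ]

def IsCircPlacement (P : Fin k → Finset (γ × γ)) : Prop :=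
  (∀ i, NonAttacking (P i)) ∧ ∀ i, ∀ x ∈ P i, ∀ y ∈ P (i + 1), x.1 ≠ y.2

theorem circNonAtt_iff {n : ℕ} {R : Finset (Fin k × Fin n × Fin n)} :
    CircNonAtt n k R ↔ IsCircPlacement (boardAt R) := by
  have hsucc : ∀ i j : Fin k, ((i : ℕ) + 1) % k = j ↔ i + 1 = j := fun i j => by
    rw [Fin.ext_iff, Fin.val_add, Fin.val_one', Nat.add_mod_mod]
  constructor
  · rintro ⟨hboard, hcross⟩
    refine ⟨fun i x hx y hy hne => ?_, fun i x hx y hy => ?_⟩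
    · exact hboard _ (mem_boardAt.1 hx) _ (mem_boardAt.1 hy) (by simpa using hne) rfl
    · exact hcross _ (mem_boardAt.1 hx) _ (mem_boardAt.1 hy) ((hsucc _ _).2 rfl)
  · rintro ⟨hboard, hcross⟩
    refine ⟨?_, ?_⟩
    · rintro ⟨i, x⟩ hx ⟨j, y⟩ hy hne (rfl : i = j)
      exact hboard i x (mem_boardAt.2 hx) y (mem_boardAt.2 hy) (by rintro rfl; exact hne rfl)
    · rintro ⟨i, x⟩ hx ⟨j, y⟩ hy hij
      obtain rfl := (hsucc i j).1 hij
      exact hcross i x (mem_boardAt.2 hx) y (mem_boardAt.2 hy)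

theorem IsCircPlacement.card_add_card_succ_le {P : Fin k → Finset (γ × γ)}
    (hP : IsCircPlacement P) (i : Fin k) : #(P i) + #(P (i + 1)) ≤ Fintype.card γ := by
  have hdisj : Disjoint ((P i).image Prod.fst) ((P (i + 1)).image Prod.snd) := by
    simp only [disjoint_left, mem_image]
    rintro _ ⟨x, hx, rfl⟩ ⟨y, hy, hxy⟩
    exact hP.2 i x hx y hy hxy.symm
  calc #(P i) + #(P (i + 1))
      = #((P i).image Prod.fst ∪ (P (i + 1)).image Prod.snd) := by
        rw [card_union_of_disjoint hdisj, card_image_of_injOn (hP.1 i).injOn_fst,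
          card_image_of_injOn (hP.1 (i + 1)).injOn_snd]
    _ ≤ Fintype.card γ := card_le_univ _

theorem isCircPlacement_and_image_snd_iff {P : Fin k → Finset (γ × γ)} {C : Fin k → Finset γ} :
    (IsCircPlacement P ∧ ∀ i, (P i).image Prod.snd = C i) ↔
      ∀ i, P i ∈ rookPlacements (C i) (C (i + 1))ᶜ := by
  simp only [mem_rookPlacements, mem_compl]
  constructor
  · rintro ⟨⟨hboard, hcross⟩, hcol⟩ i
    refine ⟨hboard i, hcol i, fun x hx hxC => ?_⟩
    obtain ⟨y, hy, hyx⟩ := mem_image.1 (hcol (i + 1) ▸ hxC)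
    exact hcross i x hx y hy hyx.symm
  · intro h
    refine ⟨⟨fun i => (h i).1, fun i x hx y hy hxy => (h i).2.2 x hx ?_⟩, fun i => (h i).2.1⟩
    rw [hxy, ← (h (i + 1)).2.1]
    exact mem_image_of_mem _ hy

theorem filter_isCircPlacement_image_snd_eq {a : Fin k → ℕ} {C : Fin k → Finset γ}
    (hC : ∀ i, #(C i) = a i) :
    ({P : Fin k → Finset (γ × γ) | (IsCircPlacement P ∧ ∀ i, #(P i) = a i) ∧
        (fun i => (P i).image Prod.snd) = C} : Finset _) =
      Fintype.piFinset fun i => rookPlacements (C i) (C (i + 1))ᶜ := by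
  ext P
  simp only [mem_filter, mem_univ, true_and, Fintype.mem_piFinset,
    ← isCircPlacement_and_image_snd_iff, funext_iff]
  refine ⟨fun ⟨⟨hP, _⟩, hcol⟩ => ⟨hP, hcol⟩, fun ⟨hP, hcol⟩ => ⟨⟨hP, fun i => ?_⟩, hcol⟩⟩
  rw [← hC, ← hcol, card_image_of_injOn (hP.1 i).injOn_snd]

theorem card_isCircPlacement (a : Fin k → ℕ) :
    #{P : Fin k → Finset (γ × γ) | IsCircPlacement P ∧ ∀ i, #(P i) = a i} =
      ∏ i, (Fintype.card γ).choose (a i) * (Fintype.card γ - a (i + 1)).descFactorial (a i) := by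
  have hmaps :
      ∀ P ∈ ({P | IsCircPlacement P ∧ ∀ i, #(P i) = a i} : Finset (Fin k → Finset (γ × γ))),
        (fun i => (P i).image Prod.snd) ∈ Fintype.piFinset fun i => powersetCard (a i) univ := by
    intro P hP
    simp only [mem_filter, mem_univ, true_and] at hP
    simpa [mem_powersetCard_univ, card_image_of_injOn (hP.1.1 _).injOn_snd] using hP.2
  rw [card_eq_sum_card_fiberwise hmaps]
  have hfiber : ∀ C ∈ Fintype.piFinset fun i => powersetCard (a i) univ,
      #{P ∈ ({P | IsCircPlacement P ∧ ∀ i, #(P i) = a i} : Finset (Fin k → Finset (γ × γ))) |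
        (fun i => (P i).image Prod.snd) = C} =
        ∏ i, (Fintype.card γ - a (i + 1)).descFactorial (a i) := by
    intro C hC
    simp only [Fintype.mem_piFinset, mem_powersetCard_univ] at hC
    rw [filter_filter, filter_isCircPlacement_image_snd_eq hC, Fintype.card_piFinset]
    refine prod_congr rfl fun i _ => ?_
    rw [card_rookPlacements, card_compl, hC, hC]
  rw [sum_congr rfl hfiber, sum_const, Fintype.card_piFinset, smul_eq_mul, ← prod_mul_distrib]
  simp [card_powersetCard]

end CircularPlacements

section RookCounts

variable {n k : ℕ}

theorem sum_bCount (R : Finset (Fin k × Fin n × Fin n)) : ∑ i, bCount R i = #R :=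
  (card_eq_sum_card_fiberwise fun r _ => mem_univ r.1).symm

theorem bCount_eq_card_boardAt (R : Finset (Fin k × Fin n × Fin n)) (i : Fin k) :
    bCount R i = #(boardAt R i) :=
  (card_boardAt R i).symm

variable [NeZero k]

theorem CircNonAtt.bCount_add_bCount_succ_le {R : Finset (Fin k × Fin n × Fin n)}
    (hR : CircNonAtt n k R) (i : Fin k) : bCount R i + bCount R (i + 1) ≤ n := by
  simpa [bCount_eq_card_boardAt] using (circNonAtt_iff.1 hR).card_add_card_succ_le i

theorem card_circNonAtt_bCount_eq (a : Fin k → ℕ) :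
    #{R : Finset (Fin k × Fin n × Fin n) | CircNonAtt n k R ∧ bCount R = a} =
      ∏ i, n.choose (a i) * (n - a (i + 1)).descFactorial (a i) := by
  have hboards := card_isCircPlacement (γ := Fin n) a
  rw [Fintype.card_fin] at hboards
  rw [← hboards]
  refine card_equiv boardAtEquiv fun R => ?_
  simp [boardAtEquiv, circNonAtt_iff, funext_iff, bCount_eq_card_boardAt]

end RookCounts

theorem exists_add_one_eq_of_sum_add_one_eq {ι : Type*} [Fintype ι] {f : ι → ℕ} {c : ℕ}
    (hle : ∀ i, f i ≤ c) (hsum : ∑ i, f i + 1 = Fintype.card ι * c) :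
    ∃ i₀, f i₀ + 1 = c ∧ ∀ i ≠ i₀, f i = c := by
  have hdef : ∑ i, (c - f i) = 1 := by
    have := sum_tsub_distrib (s := univ) (f := fun _ => c) (g := f) fun i _ => hle i
    rw [sum_const, card_univ, smul_eq_mul] at this
    omega
  obtain ⟨i₀, -, hi₀⟩ := exists_ne_zero_of_sum_ne_zero (hdef ▸ one_ne_zero)
  have hrest := add_sum_erase univ (fun i => c - f i) (mem_univ i₀)
  rw [hdef] at hrest
  refine ⟨i₀, by omega, fun i hi => ?_⟩
  have := (sum_eq_zero_iff.1 (by omega : ∑ i ∈ univ.erase i₀, (c - f i) = 0)) i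
    (mem_erase.2 ⟨hi, mem_univ i⟩)
  have := hle i
  omega

theorem alternating_of_add_succ_eq {L c : ℕ} {b : Fin (L + 1) → ℕ}
    (h : ∀ s : Fin L, b s.castSucc + b s.succ = c) (s : Fin (L + 1)) :
    if Even (s : ℕ) then b s = b 0 else b s + b 0 = c := by
  induction s using Fin.induction with
  | zero => simp
  | succ s ih =>
    have := h s
    simp only [Fin.val_succ, Fin.val_castSucc, Nat.even_add_one] at *
    split_ifs at ih ⊢ <;> omega

section Pattern

variable {j : ℕ} (m : ℕ)

/-- The cyclic shift, starting at board `t`, of the extremal composition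
`(m, m + 1, m, …, m + 1, m)` of `(n * k - 1) / 2`, where `n = 2 * m + 1` and `k = 2 * j + 1`. -/
def altPattern (t i : Fin (2 * j + 1)) : ℕ :=
  if Even (i - t : Fin (2 * j + 1)).val then m else m + 1

theorem altPattern_add_altPattern_succ (t i : Fin (2 * j + 1)) :
    altPattern m t i + altPattern m t (i + 1) = if i + 1 = t then 2 * m else 2 * m + 1 := by
  have hsucc : i + 1 - t = (i - t) + 1 := by abel
  have hlast : i + 1 = t ↔ i - t = Fin.last (2 * j) := by
    rw [← sub_eq_zero, hsucc, ← Fin.last_add_one, add_left_inj]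
  simp only [altPattern, hsucc, Fin.val_add_one, hlast]
  split_ifs with h <;> simp_all [Nat.even_add_one] <;> omega

@[to_additive]
theorem prod_altPattern {M : Type*} [CommMonoid M] (f : ℕ → M) (t : Fin (2 * j + 1)) :
    ∏ i, f (altPattern m t i) = f m ^ (j + 1) * f (m + 1) ^ j := by
  rw [← Equiv.prod_comp (Equiv.addRight t)]
  simp only [altPattern, Equiv.coe_addRight, add_sub_cancel_right]
  rw [Fin.prod_univ_eq_prod_range (fun v => f (if Even v then m else m + 1))]
  clear t
  induction j with
  | zero => simp
  | succ j ih =>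
    rw [show 2 * (j + 1) + 1 = 2 * j + 1 + 1 + 1 by ring, prod_range_succ, prod_range_succ, ih,
      if_neg (show ¬Even (2 * j + 1) by simp),
      if_pos (show Even (2 * j + 1 + 1) from ⟨j + 1, by ring⟩), pow_succ (f m) (j + 1),
      pow_succ (f (m + 1)) j]
    ac_rfl

theorem altPattern_injective : Function.Injective (altPattern m (j := j)) := by
  intro t t' h
  have := altPattern_add_altPattern_succ m t (t - 1)
  rw [h, altPattern_add_altPattern_succ, sub_add_cancel] at this
  by_contra hne
  simp [hne] at this

theorem eq_altPattern_of_sum_eq {a : Fin (2 * j + 1) → ℕ} (hadj : ∀ i, a i + a (i + 1) ≤ 2 * m + 1)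
    (hsum : 2 * ∑ i, a i + 1 = (2 * m + 1) * (2 * j + 1)) : ∃ t, a = altPattern m t := by
  have hpairs : ∑ i, (a i + a (i + 1)) + 1 = Fintype.card (Fin (2 * j + 1)) * (2 * m + 1) := by
    have hshift : ∑ i, a (i + 1) = ∑ i, a i := Equiv.sum_comp (Equiv.addRight 1) a
    rw [sum_add_distrib, hshift, Fintype.card_fin]
    linarith
  obtain ⟨i₀, hi₀, hrest⟩ := exists_add_one_eq_of_sum_add_one_eq hadj hpairs
  have halt := alternating_of_add_succ_eq (b := fun s => a (i₀ + 1 + s)) (c := 2 * m + 1)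
    fun s => by
      rw [← Fin.coeSucc_eq_succ, ← add_assoc]
      refine hrest _ fun h => Fin.succ_ne_zero s ?_
      have h1 : s.castSucc + 1 = 0 := add_left_cancel (a := i₀) <| by
        conv_rhs => rw [add_zero, ← h]
        abel
      exact Fin.coeSucc_eq_succ.symm.trans h1
  have hm : a (i₀ + 1) = m := by
    have := halt (Fin.last _)
    rw [if_pos (by simp), show i₀ + 1 + Fin.last (2 * j) = i₀ by
      rw [add_assoc, add_comm 1, Fin.last_add_one, add_zero], add_zero] at this
    omega
  refine ⟨i₀ + 1, funext fun i => ?_⟩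
  have := halt (i - (i₀ + 1))
  simp only [add_sub_cancel, add_zero, hm] at this
  unfold altPattern
  split_ifs at this ⊢ <;> omega

end Pattern

theorem Nat.choose_mul_descFactorial_self (n a : ℕ) :
    n.choose a * a.descFactorial a = n.descFactorial a := by
  rw [Nat.descFactorial_self, Nat.descFactorial_eq_factorial_mul_choose, mul_comm]

theorem Nat.choose_mul_succ_descFactorial (n a : ℕ) :
    n.choose a * (a + 1).descFactorial a = (a + 1) * n.descFactorial a := by
  have h := Nat.descFactorial_succ (a + 1) a
  rw [Nat.descFactorial_self, Nat.add_sub_cancel_left, one_mul] at h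
  rw [← h, Nat.factorial_succ, ← Nat.choose_mul_descFactorial_self, Nat.descFactorial_self]
  ring

theorem prod_choose_mul_descFactorial_altPattern {j : ℕ} (m : ℕ) (t : Fin (2 * j + 1)) :
    ∏ i, (2 * m + 1).choose (altPattern m t i) *
        (2 * m + 1 - altPattern m t (i + 1)).descFactorial (altPattern m t i) =
      (m + 1) * (2 * m + 1).descFactorial m ^ (j + 1) *
        (2 * m + 1).descFactorial (m + 1) ^ j := by
  have hterm : ∀ i, (2 * m + 1).choose (altPattern m t i) *
        (2 * m + 1 - altPattern m t (i + 1)).descFactorial (altPattern m t i) =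
      (if i = t - 1 then m + 1 else 1) * (2 * m + 1).descFactorial (altPattern m t i) := by
    intro i
    have hpair := altPattern_add_altPattern_succ m t i
    simp only [← eq_sub_iff_add_eq] at hpair
    split_ifs at hpair ⊢
    · have hi : altPattern m t i = m ∧ altPattern m t (i + 1) = m := by
        unfold altPattern at hpair ⊢
        split_ifs at hpair ⊢ <;> omega
      rw [hi.1, hi.2, show 2 * m + 1 - m = m + 1 by omega, Nat.choose_mul_succ_descFactorial]
    · rw [show 2 * m + 1 - altPattern m t (i + 1) = altPattern m t i by omega,
        Nat.choose_mul_descFactorial_self, one_mul]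
  rw [prod_congr rfl fun i _ => hterm i, prod_mul_distrib, prod_ite_eq', if_pos (mem_univ _),
    prod_altPattern, mul_assoc]

theorem card_filter_and_mem_image_eq_sum {ι α β : Type*} [Fintype ι] [Fintype α] [DecidableEq β]
    (p : α → Prop) [DecidablePred p] (f : α → β) {g : ι → β} (hg : Function.Injective g) :
    #{x | p x ∧ f x ∈ univ.image g} = ∑ i, #{x | p x ∧ f x = g i} := by
  rw [card_eq_sum_card_fiberwise fun x hx => (mem_filter.1 hx).2.2, sum_image hg.injOn]
  refine sum_congr rfl fun i _ => ?_
  rw [filter_filter]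
  refine congrArg card <| filter_congr fun x _ => ⟨fun h => ⟨h.1.1, h.2⟩, fun h => ?_⟩
  exact ⟨⟨h.1, h.2 ▸ mem_image_of_mem _ (mem_univ i)⟩, h.2⟩

theorem CircNonAtt.card_eq_iff_bCount_mem {m j : ℕ}
    {R : Finset (Fin (2 * j + 1) × Fin (2 * m + 1) × Fin (2 * m + 1))}
    (hR : CircNonAtt _ _ R) :
    #R = ((2 * m + 1) * (2 * j + 1) - 1) / 2 ↔ bCount R ∈ univ.image (altPattern m) := by
  have hN : ((2 * m + 1) * (2 * j + 1) - 1) / 2 = (j + 1) * m + j * (m + 1) := by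
    rw [show (2 * m + 1) * (2 * j + 1) = 2 * ((j + 1) * m + j * (m + 1)) + 1 by ring]
    omega
  rw [← sum_bCount, hN]
  simp only [mem_image, mem_univ, true_and]
  constructor
  · intro hsum
    obtain ⟨t, ht⟩ := eq_altPattern_of_sum_eq m hR.bCount_add_bCount_succ_le (by rw [hsum]; ring)
    exact ⟨t, ht.symm⟩
  · rintro ⟨t, ht⟩
    rw [← ht]
    exact (sum_altPattern m id t).trans (by simp)

/-- For `k` and `n` both odd, the number of maximum rook placements on the circular
chained board is `k·⌈n/2⌉·((n)_⌈n/2⌉)^⌊k/2⌋·((n)_⌊n/2⌋)^⌈k/2⌉`. -/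
theorem circular_max_count_k_odd_n_odd (n k : ℕ) (hko : Odd k) (hno : Odd n) :
    Nat.card {R : Finset (Fin k × Fin n × Fin n) //
        CircNonAtt n k R ∧ R.card = (n * k - 1) / 2} =
      k * ((n + 1) / 2) * (Nat.descFactorial n ((n + 1) / 2)) ^ (k / 2) *
        (Nat.descFactorial n (n / 2)) ^ ((k + 1) / 2) := by
  obtain ⟨j, rfl⟩ := hko
  obtain ⟨m, rfl⟩ := hno
  rw [Nat.card_eq_fintype_card, Fintype.card_subtype,
    filter_congr fun R _ => and_congr_right CircNonAtt.card_eq_iff_bCount_mem,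
    card_filter_and_mem_image_eq_sum _ _ (altPattern_injective m)]
  simp only [card_circNonAtt_bCount_eq, prod_choose_mul_descFactorial_altPattern, sum_const,
    card_univ, Fintype.card_fin, smul_eq_mul]
  rw [show (2 * m + 1 + 1) / 2 = m + 1 by omega, show (2 * m + 1) / 2 = m by omega,
    show (2 * j + 1) / 2 = j by omega, show (2 * j + 1 + 1) / 2 = j + 1 by omega]
  ring
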